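/- In the marked cycle on Z_k with start 0 and end x (0 < x < k), if the marked nodes strictly between x and k are exactly {i_1} with x < i_1 < k, then the path a^{k−i_1−1} d c^{k−i_1−1+x} (followed by a b-move if x ∈ B) is a valid path of length 2k − 2i_1 + x − 1 + Δ_x, where Δ_x = 1 if x ∈ B and 0 otherwise, provided all marked nodes other than i_1 lie in {0,…,x}. -/
import Mathlib


/-- The four move types in the marked cycle. -/
inductive Move : Type
  | a | b | c | d
deriving DecidableEq

/-- Where a move from node `x` in `ZMod k` leads. -/
def Move.step {k : ℕ} (x : ZMod k) : Move → ZMod k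
  | .a => x - 1
  | .b => x
  | .c => x + 1
  | .d => x

/-- The node covered by a move performed from node `x`. -/
def Move.covers {k : ℕ} (x : ZMod k) : Move → ZMod k
  | .a => x - 1
  | .b => x
  | .c => x
  | .d => x - 1

/-- The node reached after performing a sequence of moves starting at `s`. -/
def endAt {k : ℕ} (s : ZMod k) : List Move → ZMod k
  | [] => s
  | m :: ms => endAt (Move.step s m) ms

/-- The set of nodes covered by a sequence of moves starting at `s`. -/
def coveredSet {k : ℕ} (s : ZMod k) : List Move → Set (ZMod k)
  | [] => ∅
  | m :: ms => insert (Move.covers s m) (coveredSet (Move.step s m) ms)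

/-- A valid path in the marked cycle on `ZMod k` with marked set `B`, start `s`,
end `t`: a nonempty sequence of moves from `s` to `t` covering every node of `B`. -/
def ValidPath {k : ℕ} (B : Set (ZMod k)) (s t : ZMod k) (p : List Move) : Prop :=
  p ≠ [] ∧ endAt s p = t ∧ B ⊆ coveredSet s p

/-- A shortest valid path: valid and of minimum length among all valid paths. -/
def ShortestPath {k : ℕ} (B : Set (ZMod k)) (s t : ZMod k) (p : List Move) : Prop :=
  ValidPath B s t p ∧ ∀ q : List Move, ValidPath B s t q → p.length ≤ q.length

lemma endAt_append {k : ℕ} (s : ZMod k) (p q : List Move) :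
    endAt s (p ++ q) = endAt (endAt s p) q := by
  induction p generalizing s with
  | nil => rfl
  | cons m ms ih => simp [endAt, ih]

lemma coveredSet_append {k : ℕ} (s : ZMod k) (p q : List Move) :
    coveredSet s (p ++ q) = coveredSet s p ∪ coveredSet (endAt s p) q := by
  induction p generalizing s with
  | nil => simp [coveredSet, endAt]
  | cons m ms ih => simp [coveredSet, endAt, ih, Set.insert_union]

lemma endAt_replicate_a {k : ℕ} (s : ZMod k) (n : ℕ) :
    endAt s (List.replicate n Move.a) = s - n := by
  induction n generalizing s with
  | zero => simp [endAt]
  | succ n ih =>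
    rw [List.replicate_succ]
    simp only [endAt, Move.step, ih]
    push_cast; ring

lemma endAt_replicate_c {k : ℕ} (s : ZMod k) (n : ℕ) :
    endAt s (List.replicate n Move.c) = s + n := by
  induction n generalizing s with
  | zero => simp [endAt]
  | succ n ih =>
    rw [List.replicate_succ]
    simp only [endAt, Move.step, ih]
    push_cast; ring

lemma mem_covered_c {k : ℕ} (s : ZMod k) (n j : ℕ) (hj : j < n) :
    s + j ∈ coveredSet s (List.replicate n Move.c) := by
  induction n generalizing s j with
  | zero => omega
  | succ n ih =>
    rw [List.replicate_succ]
    simp only [coveredSet, Move.covers, Move.step]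
    rcases j with _ | j
    · left; simp
    · right
      have h1 := ih (s + 1) j (by omega)
      have h2 : s + (((j + 1 : ℕ)) : ZMod k) = s + 1 + (j : ZMod k) := by push_cast; ring
      rw [h2]; exact h1


open scoped Classical in
/-- start 0, end x (0 < x < k); if the marked nodes strictly between x
and k are exactly {i₁}, then a^{k−i₁−1} d c^{k−i₁−1+x} (followed by a b-move iff
x ∈ B) is a valid path of length 2k − 2i₁ + x − 1 + Δ_x. -/
theorem one_turn_anticlockwise_valid (k x i₁ : ℕ) (hk : 2 ≤ k) (hx : 0 < x)
    (hxi : x < i₁) (hik : i₁ < k) (B : Set (ZMod k)) (hi₁ : (i₁ : ZMod k) ∈ B)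
    (hB : ∀ y ∈ B, y.val ≤ x ∨ y = (i₁ : ZMod k)) :
    ValidPath B 0 (x : ZMod k)
      (List.replicate (k - i₁ - 1) Move.a ++ [Move.d] ++
        List.replicate (k - i₁ - 1 + x) Move.c ++
        if (x : ZMod k) ∈ B then [Move.b] else []) ∧
    (List.replicate (k - i₁ - 1) Move.a ++ [Move.d] ++
      List.replicate (k - i₁ - 1 + x) Move.c ++
      if (x : ZMod k) ∈ B then [Move.b] else []).length =
      2 * k - 2 * i₁ + x - 1 + if (x : ZMod k) ∈ B then 1 else 0 := by
  haveI : NeZero k := ⟨by omega⟩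
  set p := k - i₁ - 1 with hp
  have hkcast : ((k : ℕ) : ZMod k) = 0 := ZMod.natCast_self k
  have hpk : p + 1 + i₁ = k := by omega
  have hpsum : ((p : ZMod k)) + 1 + (i₁ : ZMod k) = 0 := by
    have : (((p + 1 + i₁ : ℕ)) : ZMod k) = ((k : ℕ) : ZMod k) := by rw [hpk]
    push_cast at this
    rw [hkcast] at this
    linear_combination this
  -- endpoint after a-run
  have e1 : endAt (0 : ZMod k) (List.replicate p Move.a) = -(p : ZMod k) := by
    rw [endAt_replicate_a]; ring
  have e2 : endAt (0 : ZMod k) (List.replicate p Move.a ++ [Move.d]) = -(p : ZMod k) := by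
    rw [endAt_append, e1]; rfl
  have e3 : endAt (0 : ZMod k)
      (List.replicate p Move.a ++ [Move.d] ++ List.replicate (p + x) Move.c)
      = (x : ZMod k) := by
    rw [endAt_append, e2, endAt_replicate_c]
    push_cast
    linear_combination -hpsum + hpsum
  have hend : endAt (0 : ZMod k)
      (List.replicate p Move.a ++ [Move.d] ++ List.replicate (p + x) Move.c ++
        if (x : ZMod k) ∈ B then [Move.b] else []) = (x : ZMod k) := by
    rw [endAt_append, e3]
    split <;> rfl
  have hcov : B ⊆ coveredSet (0 : ZMod k)
      (List.replicate p Move.a ++ [Move.d] ++ List.replicate (p + x) Move.c ++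
        if (x : ZMod k) ∈ B then [Move.b] else []) := by
    intro y hy
    rw [coveredSet_append, coveredSet_append, coveredSet_append, e1, e2, e3]
    rcases hB y hy with hyx | hyi
    · -- y.val ≤ x
      have hyval : ((y.val : ℕ) : ZMod k) = y := by
        simp [ZMod.natCast_val, ZMod.cast_id]
      rcases lt_or_eq_of_le hyx with hlt | heq
      · -- covered by c-run
        left; right
        have hmem := mem_covered_c (-(p : ZMod k)) (p + x) (p + y.val) (by omega)
        have heq : -(p : ZMod k) + ((p + y.val : ℕ) : ZMod k) = y := by
          push_cast [hyval]; ring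
        exact heq ▸ hmem
      · -- y = x, covered by b
        have hyx' : y = (x : ZMod k) := by rw [← hyval, heq]
        right
        rw [hyx'] at hy
        rw [if_pos hy]
        left
        rw [hyx']; rfl
    · -- y = i₁, covered by d
      left; left; right
      rw [hyi]
      simp only [coveredSet, Move.covers, Move.step]
      left
      linear_combination hpsum
  refine ⟨⟨by simp, hend, hcov⟩, ?_⟩
  simp only [List.length_append, List.length_replicate, List.length_cons, List.length_nil]
  split <;> simp <;> omega
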